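/- The 3×3 matrix A = [[0,1,1],[2,0,1],[-4,-5,0]] is a semimonotone star matrix, but its principal submatrix [[0,1],[2,0]] (rows and columns 1,2) is not a semimonotone star matrix. Thus the class E_0^s is not closed under taking principal submatrices. -/

import Mathlib

/-- A is semimonotone (E₀). -/
def IsSemimonotone {n : ℕ} (A : Matrix (Fin n) (Fin n) ℝ) : Prop :=
  ∀ x : Fin n → ℝ, 0 ≤ x → x ≠ 0 → ∃ i, 0 < x i ∧ 0 ≤ A.mulVec x i

/-- A is semimonotone star (E₀ˢ). -/
def IsSemimonotoneStar {n : ℕ} (A : Matrix (Fin n) (Fin n) ℝ) : Prop :=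
  IsSemimonotone A ∧
    ∀ x : Fin n → ℝ, 0 ≤ x → 0 ≤ A.mulVec x → dotProduct x (A.mulVec x) = 0 →
      A.transpose.mulVec x ≤ 0

/-- Take `i` the first index in the support of `x`: then `(A x) i` only involves entries `A i j`
with `i ≤ j`. -/
theorem isSemimonotone_of_upper_nonneg {n : ℕ} {A : Matrix (Fin n) (Fin n) ℝ}
    (hA : ∀ i j, i ≤ j → 0 ≤ A i j) : IsSemimonotone A := by
  intro x hx hx0
  obtain ⟨i, hi, hmin⟩ := (Finset.univ.filter (x · ≠ 0)).exists_min_image id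
    (by simpa [Finset.filter_nonempty_iff, Function.ne_iff] using hx0)
  simp only [Finset.mem_filter, Finset.mem_univ, true_and, id] at hi hmin
  refine ⟨i, (hx i).lt_of_ne' hi, ?_⟩
  rw [Matrix.mulVec, dotProduct]
  refine Finset.sum_nonneg fun j _ => ?_
  rcases lt_or_ge j i with hji | hij
  · have hxj : x j = 0 := by_contra fun h => (hmin j h).not_gt hji
    simp [hxj]
  · exact mul_nonneg (hA i j hij) (hx j)

/-- The witness is `x = eᵢ`: then `A x` is the `i`-th column and `xᵀ A x = A i i`. -/
theorem not_isSemimonotoneStar_of_diag_eq_zero {n : ℕ} {A : Matrix (Fin n) (Fin n) ℝ}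
    {i k : Fin n} (hii : A i i = 0) (hcol : ∀ j, 0 ≤ A j i) (hik : 0 < A i k) :
    ¬ IsSemimonotoneStar A := by
  rintro ⟨-, hstar⟩
  have hik' : A i k ≤ 0 := by
    simpa using hstar (Pi.single i 1) (Pi.single_nonneg.2 zero_le_one)
      (by simpa [Matrix.mulVec_single_one, Pi.le_def] using hcol) (by simp [hii]) k
  exact hik'.not_gt hik

theorem stmt6 :
    IsSemimonotoneStar !![(0 : ℝ), 1, 1; 2, 0, 1; -4, -5, 0] ∧
      ¬ IsSemimonotoneStar !![(0 : ℝ), 1; 2, 0] := by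
  refine ⟨⟨isSemimonotone_of_upper_nonneg ?_, ?_⟩, ?_⟩
  · intro i j hij
    fin_cases i <;> fin_cases j <;> simp at hij ⊢
  · intro x hx hAx _
    have hx0 : 0 ≤ x 0 := hx 0
    have hx1 : 0 ≤ x 1 := hx 1
    have hx2 : 0 ≤ x 2 := hx 2
    -- the last row `(-4, -5, 0)` of `A x ≥ 0` forces `x` onto the last coordinate
    have hlast : 0 ≤ -4 * x 0 - 5 * x 1 := by
      simpa [Matrix.mulVec, dotProduct, Fin.sum_univ_three, sub_eq_add_neg] using hAx 2
    have hx0_eq : x 0 = 0 := by linarith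
    have hx1_eq : x 1 = 0 := by linarith
    intro i
    fin_cases i <;> simp [Matrix.mulVec, dotProduct, Fin.sum_univ_three, hx0_eq, hx1_eq] <;> linarith
  · exact not_isSemimonotoneStar_of_diag_eq_zero (i := 0) (k := 1) (by simp)
      (fun j => by fin_cases j <;> simp) (by simp)
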